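/- arXiv:2006.02410 — 2 statements merged into one kernel-verified Lean document; each statement's English description precedes it below -/
import Mathlib

section
/- Let Ω ⊂ ℝ^N be a measurable set of finite measure, t : Ω → ℝ a measurable function with 1 < t⁻ ≤ t(x) ≤ t⁺ < ∞ for a.e. x. If {fₙ} is a sequence of measurable functions on Ω with sup_n ∫_Ω |fₙ(x)|^{t(x)} dx < ∞ and fₙ(x) → f(x) a.e. in Ω, then ∫_Ω |f(x)|^{t(x)} dx < ∞ and lim_{n→∞} ∫_Ω | |fₙ|^{t(x)} − |fₙ − f|^{t(x)} − |f|^{t(x)} | dx = 0. -/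
open MeasureTheory Filter Topology

/-!
Fatou's lemma makes `|f|^t` integrable with modular at most `C`, and then
`|F n - f|^t ≤ 2^T (|F n|^t + |f|^t)` has modular bounded uniformly in `n`. The elementary
inequality `||a + b|^p - |a|^p| ≤ ε |a|^p + K_ε |b|^p`, uniform in `p ∈ [0, T]`, bounds
`Φ n = |F n|^t - |F n - f|^t - |f|^t` by `ε |F n - f|^t + (K_ε + 1) |f|^t`. Dominated convergence
applied to `(|Φ n| - ε |F n - f|^t)⁺ ≤ (K_ε + 1) |f|^t`, which tends to `0` a.e., shows that
`limsup ∫ |Φ n|` is at most `ε` times that uniform bound, for every `ε > 0`.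
-/

theorem rpow_le_mul_rpow_of_le_mul {x y c p T : ℝ} (hx : 0 ≤ x) (hc : 1 ≤ c) (hp : 0 ≤ p)
    (hpT : p ≤ T) (h : x ≤ c * y) : x ^ p ≤ c ^ T * y ^ p := by
  have hy : 0 ≤ y := nonneg_of_mul_nonneg_right (hx.trans h) (by linarith)
  calc x ^ p ≤ (c * y) ^ p := Real.rpow_le_rpow hx h hp
    _ = c ^ p * y ^ p := Real.mul_rpow (by linarith) hy
    _ ≤ c ^ T * y ^ p := by gcongr

theorem mul_rpow_le_rpow_of_mul_le {x y c p T : ℝ} (hy : 0 ≤ y) (hc₀ : 0 ≤ c) (hc₁ : c ≤ 1)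
    (hp : 0 ≤ p) (hpT : p ≤ T) (h : c * y ≤ x) : c ^ T * y ^ p ≤ x ^ p :=
  calc c ^ T * y ^ p ≤ c ^ p * y ^ p :=
        mul_le_mul_of_nonneg_right (Real.rpow_le_rpow_of_exponent_ge' hc₀ hc₁ hp hpT)
          (by positivity)
    _ = (c * y) ^ p := (Real.mul_rpow hc₀ hy).symm
    _ ≤ x ^ p := Real.rpow_le_rpow (mul_nonneg hc₀ hy) h hp

theorem exists_rpow_one_add_lt_and_lt_rpow_one_sub (T : ℝ) {ε : ℝ} (hε : 0 < ε) :
    ∃ δ, 0 < δ ∧ δ < 1 ∧ (1 + δ) ^ T < 1 + ε ∧ 1 - ε < (1 - δ) ^ T := by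
  have hplus : Tendsto (fun s : ℝ => (1 + s) ^ T) (𝓝 0) (𝓝 1) := by
    simpa using ((tendsto_const_nhds (x := (1 : ℝ))).add tendsto_id).rpow_const
      (Or.inl (by norm_num : (1 : ℝ) + 0 ≠ 0))
  have hminus : Tendsto (fun s : ℝ => (1 - s) ^ T) (𝓝 0) (𝓝 1) := by
    simpa using ((tendsto_const_nhds (x := (1 : ℝ))).sub tendsto_id).rpow_const
      (Or.inl (by norm_num : (1 : ℝ) - 0 ≠ 0))
  have hnear : ∀ᶠ s in 𝓝 (0 : ℝ), s < 1 ∧ (1 + s) ^ T < 1 + ε ∧ 1 - ε < (1 - s) ^ T :=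
    (eventually_lt_nhds one_pos).and ((hplus.eventually_lt_const (by linarith)).and
      (hminus.eventually_const_lt (by linarith)))
  obtain ⟨δ, hδ, hδ0⟩ := ((hnear.filter_mono nhdsWithin_le_nhds).and self_mem_nhdsWithin :
    ∀ᶠ s in 𝓝[>] (0 : ℝ), _ ∧ 0 < s).exists
  exact ⟨δ, hδ0, hδ⟩

theorem exists_abs_rpow_add_sub_rpow_le (T : ℝ) {ε : ℝ} (hε : 0 < ε) :
    ∃ K, ∀ p, 0 ≤ p → p ≤ T → ∀ a b : ℝ,
      |(|a + b| ^ p - |a| ^ p)| ≤ ε * |a| ^ p + K * |b| ^ p := by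
  obtain ⟨δ, hδ₀, hδ₁, hplus, hminus⟩ := exists_rpow_one_add_lt_and_lt_rpow_one_sub T hε
  refine ⟨(1 + δ⁻¹) ^ T + δ⁻¹ ^ T, fun p hp hpT a b => ?_⟩
  have hap : 0 ≤ |a| ^ p := by positivity
  have hbp : 0 ≤ |b| ^ p := by positivity
  -- Either `|a + b|` is within a factor `1 ± δ` of `|a|`, or both `|a + b|` and `|a|` are `O(|b|)`.
  rcases le_or_gt |b| (δ * |a|) with hb | hb
  · have hab : |a| ≤ |a + b| + |b| := by simpa using abs_add_le (a + b) (-b)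
    have hle : |a + b| ^ p ≤ (1 + δ) ^ T * |a| ^ p :=
      rpow_le_mul_rpow_of_le_mul (abs_nonneg _) (by linarith) hp hpT
        (by linarith [abs_add_le a b])
    have hge : (1 - δ) ^ T * |a| ^ p ≤ |a + b| ^ p :=
      mul_rpow_le_rpow_of_mul_le (abs_nonneg _) (by linarith) (by linarith) hp hpT
        (by linarith)
    have : 0 ≤ ((1 + δ⁻¹) ^ T + δ⁻¹ ^ T) * |b| ^ p := by positivity
    rw [abs_le]; constructor <;> nlinarith
  · have hδinv : 1 ≤ δ⁻¹ := (one_le_inv₀ hδ₀).2 hδ₁.le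
    have ha : |a| ≤ δ⁻¹ * |b| := by rw [inv_mul_eq_div, le_div_iff₀ hδ₀]; linarith
    have hle : |a + b| ^ p ≤ (1 + δ⁻¹) ^ T * |b| ^ p :=
      rpow_le_mul_rpow_of_le_mul (abs_nonneg _) (by linarith) hp hpT
        (by linarith [abs_add_le a b])
    have hle' : |a| ^ p ≤ δ⁻¹ ^ T * |b| ^ p :=
      rpow_le_mul_rpow_of_le_mul (abs_nonneg _) hδinv hp hpT ha
    have : 0 ≤ |a + b| ^ p := by positivity
    rw [abs_le]; constructor <;> nlinarith

theorem exists_abs_rpow_sub_rpow_sub_rpow_le (T : ℝ) {ε : ℝ} (hε : 0 < ε) :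
    ∃ K, ∀ p, 0 ≤ p → p ≤ T → ∀ a b : ℝ,
      |(|a| ^ p - |a - b| ^ p - |b| ^ p)| ≤ ε * |a - b| ^ p + K * |b| ^ p := by
  obtain ⟨K, hK⟩ := exists_abs_rpow_add_sub_rpow_le T hε
  refine ⟨K + 1, fun p hp hpT a b => ?_⟩
  have h := hK p hp hpT (a - b) b
  rw [sub_add_cancel] at h
  calc _ ≤ |(|a| ^ p - |a - b| ^ p)| + |(|b| ^ p)| := abs_sub _ _
    _ ≤ ε * |a - b| ^ p + (K + 1) * |b| ^ p := by
        rw [abs_of_nonneg (by positivity : (0 : ℝ) ≤ |b| ^ p)]; linarith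

theorem abs_sub_rpow_le {p T : ℝ} (hp : 0 ≤ p) (hpT : p ≤ T) (a b : ℝ) :
    |a - b| ^ p ≤ 2 ^ T * (|a| ^ p + |b| ^ p) := by
  have hmax : |a - b| ≤ 2 * max |a| |b| := by
    linarith [abs_sub a b, le_max_left |a| |b|, le_max_right |a| |b|]
  calc |a - b| ^ p ≤ 2 ^ T * max |a| |b| ^ p :=
        rpow_le_mul_rpow_of_le_mul (abs_nonneg _) one_le_two hp hpT hmax
    _ ≤ 2 ^ T * (|a| ^ p + |b| ^ p) := by
        have : 0 ≤ |a| ^ p := by positivity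
        have : 0 ≤ |b| ^ p := by positivity
        gcongr
        rcases max_choice |a| |b| with h | h <;> rw [h] <;> linarith

theorem Filter.Tendsto.abs_rpow_sub_abs_sub_rpow_sub_rpow {ι : Type*} {l : Filter ι}
    {u : ι → ℝ} {a p : ℝ} (hu : Tendsto u l (𝓝 a)) (hp : 0 < p) :
    Tendsto (fun n => |u n| ^ p - |u n - a| ^ p - |a| ^ p) l (𝓝 0) := by
  have hmain : Tendsto (fun n => |u n| ^ p) l (𝓝 (|a| ^ p)) := hu.abs.rpow_const (Or.inr hp.le)
  have hrest : Tendsto (fun n => |u n - a| ^ p) l (𝓝 0) := by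
    simpa [Real.zero_rpow hp.ne'] using (hu.sub_const a).abs.rpow_const (Or.inr hp.le)
  simpa using (hmain.sub hrest).sub_const (|a| ^ p)

section MeasureTheory

variable {α : Type*} [MeasurableSpace α] {μ : Measure α}

theorem integrable_and_integral_le_of_tendsto {g : ℕ → α → ℝ} {h : α → ℝ} {C : ℝ}
    (hg : ∀ n, Integrable (g n) μ) (hg₀ : ∀ n, 0 ≤ᵐ[μ] g n) (hgC : ∀ n, ∫ x, g n x ∂μ ≤ C)
    (hlim : ∀ᵐ x ∂μ, Tendsto (fun n => g n x) atTop (𝓝 (h x))) :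
    Integrable h μ ∧ ∫ x, h x ∂μ ≤ C := by
  have hh₀ : 0 ≤ᵐ[μ] h := by
    filter_upwards [hlim, ae_all_iff.2 hg₀] with x hx hx₀ using ge_of_tendsto' hx hx₀
  have hfatou : ∫⁻ x, ENNReal.ofReal (h x) ∂μ ≤ ENNReal.ofReal C :=
    calc ∫⁻ x, ENNReal.ofReal (h x) ∂μ
        = ∫⁻ x, liminf (fun n => ENNReal.ofReal (g n x)) atTop ∂μ := by
          refine lintegral_congr_ae ?_
          filter_upwards [hlim] with x hx
          exact ((ENNReal.continuous_ofReal.tendsto _).comp hx).liminf_eq.symm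
      _ ≤ liminf (fun n => ∫⁻ x, ENNReal.ofReal (g n x) ∂μ) atTop :=
          lintegral_liminf_le' fun n => (hg n).aemeasurable.ennreal_ofReal
      _ ≤ ENNReal.ofReal C := liminf_le_of_frequently_le' <| .of_forall fun n => by
          rw [← ofReal_integral_eq_lintegral_ofReal (hg n) (hg₀ n)]
          exact ENNReal.ofReal_le_ofReal (hgC n)
  have hint : Integrable h μ :=
    ⟨aestronglyMeasurable_of_tendsto_ae _ (fun n => (hg n).1) hlim,
      (hasFiniteIntegral_iff_ofReal hh₀).2 (hfatou.trans_lt ENNReal.ofReal_lt_top)⟩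
  refine ⟨hint, ?_⟩
  rw [← ofReal_integral_eq_lintegral_ofReal hint hh₀, ENNReal.ofReal_le_ofReal_iff'] at hfatou
  exact hfatou.elim id fun h0 => h0.trans ((integral_nonneg_of_ae (hg₀ 0)).trans (hgC 0))

theorem norm_max_sub_zero_le_abs {y z g : ℝ} (h : y ≤ g + z) : ‖max (y - z) 0‖ ≤ |g| := by
  rw [Real.norm_of_nonneg (le_max_right _ _)]
  exact max_le (by linarith [le_abs_self g]) (abs_nonneg _)

theorem tendsto_integral_max_abs_sub_mul_zero {Φ s : ℕ → α → ℝ} {G : α → ℝ} {ε : ℝ}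
    (hΦ : ∀ n, AEStronglyMeasurable (Φ n) μ)
    (hΦlim : ∀ᵐ x ∂μ, Tendsto (fun n => Φ n x) atTop (𝓝 0))
    (hs : ∀ n, AEStronglyMeasurable (s n) μ) (hs₀ : ∀ n, 0 ≤ᵐ[μ] s n) (hε : 0 ≤ ε)
    (hG : Integrable G μ) (hΦG : ∀ n, ∀ᵐ x ∂μ, |Φ n x| ≤ G x + ε * s n x) :
    Tendsto (fun n => ∫ x, max (|Φ n x| - ε * s n x) 0 ∂μ) atTop (𝓝 0) := by
  have hbound : ∀ n, ∀ᵐ x ∂μ, ‖max (|Φ n x| - ε * s n x) 0‖ ≤ |G x| := fun n => by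
    filter_upwards [hΦG n] with x hx using norm_max_sub_zero_le_abs hx
  have hlim : ∀ᵐ x ∂μ, Tendsto (fun n => max (|Φ n x| - ε * s n x) 0) atTop (𝓝 0) := by
    filter_upwards [hΦlim, ae_all_iff.2 hs₀] with x hx hx₀
    refine squeeze_zero (fun n => le_max_right _ _) (fun n => max_le ?_ (abs_nonneg _))
      (by simpa using hx.abs)
    linarith [mul_nonneg hε (hx₀ n)]
  simpa using tendsto_integral_of_dominated_convergence (fun x => |G x|)
    (fun n => (((hΦ n).norm.sub ((hs n).const_mul ε)).sup aestronglyMeasurable_const))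
    hG.abs hbound hlim

theorem tendsto_integral_abs_of_abs_le_add_mul {Φ s : ℕ → α → ℝ} {D : ℝ}
    (hΦ : ∀ n, AEStronglyMeasurable (Φ n) μ)
    (hΦlim : ∀ᵐ x ∂μ, Tendsto (fun n => Φ n x) atTop (𝓝 0))
    (hs : ∀ n, Integrable (s n) μ) (hs₀ : ∀ n, 0 ≤ᵐ[μ] s n) (hsD : ∀ n, ∫ x, s n x ∂μ ≤ D)
    (hdom : ∀ ε > 0, ∃ G : α → ℝ, Integrable G μ ∧ ∀ n, ∀ᵐ x ∂μ, |Φ n x| ≤ G x + ε * s n x) :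
    Tendsto (fun n => ∫ x, |Φ n x| ∂μ) atTop (𝓝 0) := by
  refine tendsto_order.2 ⟨fun a ha => .of_forall fun n =>
    ha.trans_le (integral_nonneg fun x => abs_nonneg _), fun a ha => ?_⟩
  have hD : 0 ≤ D := (integral_nonneg_of_ae (hs₀ 0)).trans (hsD 0)
  set ε := a / (2 * (D + 1))
  have hε : 0 < ε := by positivity
  have hεD : ε * D < a / 2 := by
    rw [div_mul_eq_mul_div, div_lt_div_iff₀ (by positivity) two_pos]; nlinarith
  obtain ⟨G, hG, hΦG⟩ := hdom ε hε
  have hW := tendsto_integral_max_abs_sub_mul_zero hΦ hΦlim (fun n => (hs n).1) hs₀ hε.le hG hΦG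
  filter_upwards [hW.eventually (gt_mem_nhds (half_pos ha))] with n hn
  have hWint : Integrable (fun x => max (|Φ n x| - ε * s n x) 0) μ := by
    refine hG.abs.mono'
      (((hΦ n).norm.sub ((hs n).1.const_mul ε)).sup aestronglyMeasurable_const) ?_
    filter_upwards [hΦG n] with x hx using norm_max_sub_zero_le_abs hx
  calc ∫ x, |Φ n x| ∂μ ≤ ∫ x, (max (|Φ n x| - ε * s n x) 0 + ε * s n x) ∂μ :=
        integral_mono_of_nonneg (.of_forall fun x => abs_nonneg _)
          (hWint.add ((hs n).const_mul ε))
          (.of_forall fun x => by linarith [le_max_left (|Φ n x| - ε * s n x) 0])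
    _ = ∫ x, max (|Φ n x| - ε * s n x) 0 ∂μ + ε * ∫ x, s n x ∂μ := by
        rw [integral_add hWint ((hs n).const_mul ε), integral_const_mul]
    _ < a / 2 + a / 2 := by nlinarith [hsD n]
    _ = a := add_halves a

theorem integrable_abs_sub_rpow_and_integral_le
    {t : α → ℝ} {T C : ℝ} {f : α → ℝ} {F : ℕ → α → ℝ}
    (ht : Measurable t) (htb : ∀ᵐ x ∂μ, 0 ≤ t x ∧ t x ≤ T) (hf : Measurable f)
    (hF : ∀ n, Measurable (F n)) (hFint : ∀ n, Integrable (fun x => |F n x| ^ t x) μ)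
    (hFC : ∀ n, ∫ x, |F n x| ^ t x ∂μ ≤ C) (hfint : Integrable (fun x => |f x| ^ t x) μ)
    (hfC : ∫ x, |f x| ^ t x ∂μ ≤ C) (n : ℕ) :
    Integrable (fun x => |F n x - f x| ^ t x) μ ∧
      ∫ x, |F n x - f x| ^ t x ∂μ ≤ 2 ^ T * (C + C) := by
  have hle : ∀ᵐ x ∂μ, |F n x - f x| ^ t x ≤ 2 ^ T * (|F n x| ^ t x + |f x| ^ t x) := by
    filter_upwards [htb] with x hx using abs_sub_rpow_le hx.1 hx.2 _ _
  have hdom : Integrable (fun x => 2 ^ T * (|F n x| ^ t x + |f x| ^ t x)) μ :=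
    ((hFint n).add hfint).const_mul _
  have hint : Integrable (fun x => |F n x - f x| ^ t x) μ := by
    refine hdom.mono' (by fun_prop : Measurable _).aestronglyMeasurable ?_
    filter_upwards [hle] with x hx
    rwa [Real.norm_of_nonneg (by positivity)]
  refine ⟨hint, ?_⟩
  calc ∫ x, |F n x - f x| ^ t x ∂μ ≤ ∫ x, 2 ^ T * (|F n x| ^ t x + |f x| ^ t x) ∂μ :=
        integral_mono_ae hint hdom hle
    _ = 2 ^ T * (∫ x, |F n x| ^ t x ∂μ + ∫ x, |f x| ^ t x ∂μ) := by
        rw [integral_const_mul, integral_add (hFint n) hfint]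
    _ ≤ 2 ^ T * (C + C) := by gcongr; exact hFC n

theorem integrable_abs_rpow_and_tendsto_integral_abs_rpow_sub_rpow_sub_rpow
    {t : α → ℝ} {T C : ℝ} {f : α → ℝ} {F : ℕ → α → ℝ}
    (ht : Measurable t) (htb : ∀ᵐ x ∂μ, 0 < t x ∧ t x ≤ T) (hf : Measurable f)
    (hF : ∀ n, Measurable (F n)) (hFint : ∀ n, Integrable (fun x => |F n x| ^ t x) μ)
    (hFC : ∀ n, ∫ x, |F n x| ^ t x ∂μ ≤ C)
    (hlim : ∀ᵐ x ∂μ, Tendsto (fun n => F n x) atTop (𝓝 (f x))) :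
    Integrable (fun x => |f x| ^ t x) μ ∧
      Tendsto (fun n => ∫ x, |(|F n x| ^ t x - |F n x - f x| ^ t x - |f x| ^ t x)| ∂μ)
        atTop (𝓝 0) := by
  obtain ⟨hfint, hfC⟩ := integrable_and_integral_le_of_tendsto hFint
    (fun n => .of_forall fun x => by positivity) hFC
    (by filter_upwards [hlim, htb] with x hx hxt using hx.abs.rpow_const (Or.inr hxt.1.le))
  have hs := integrable_abs_sub_rpow_and_integral_le ht
    (htb.mono fun x hx => ⟨hx.1.le, hx.2⟩) hf hF hFint hFC hfint hfC
  refine ⟨hfint, tendsto_integral_abs_of_abs_le_add_mul (fun n => by fun_prop)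
    ?_ (fun n => (hs n).1) (fun n => .of_forall fun x => by positivity) (fun n => (hs n).2)
    fun ε hε => ?_⟩
  · filter_upwards [hlim, htb] with x hx hxt using hx.abs_rpow_sub_abs_sub_rpow_sub_rpow hxt.1
  · obtain ⟨K, hK⟩ := exists_abs_rpow_sub_rpow_sub_rpow_le T hε
    refine ⟨fun x => K * |f x| ^ t x, hfint.const_mul K, fun n => ?_⟩
    filter_upwards [htb] with x hx
    linarith [hK (t x) hx.1.le hx.2 (F n x) (f x)]

end MeasureTheory

theorem stmt3_general {N : ℕ} (Ω : Set (EuclideanSpace ℝ (Fin N)))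
    (t : EuclideanSpace ℝ (Fin N) → ℝ) (ht : Measurable t)
    (tm tp : ℝ) (htm : 1 < tm)
    (htb : ∀ᵐ x ∂(volume.restrict Ω), tm ≤ t x ∧ t x ≤ tp)
    (f : EuclideanSpace ℝ (Fin N) → ℝ) (hf : Measurable f)
    (F : ℕ → EuclideanSpace ℝ (Fin N) → ℝ) (hFmeas : ∀ n, Measurable (F n))
    (hint : ∀ n, IntegrableOn (fun x => |F n x| ^ t x) Ω)
    (C : ℝ) (hbound : ∀ n, (∫ x in Ω, |F n x| ^ t x) ≤ C)
    (hae : ∀ᵐ x ∂(volume.restrict Ω), Tendsto (fun n => F n x) atTop (𝓝 (f x))) :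
    IntegrableOn (fun x => |f x| ^ t x) Ω ∧
    Tendsto (fun n => ∫ x in Ω, abs (|F n x| ^ t x - |F n x - f x| ^ t x - |f x| ^ t x))
      atTop (𝓝 0) :=
  integrable_abs_rpow_and_tendsto_integral_abs_rpow_sub_rpow_sub_rpow ht
    (htb.mono fun _ hx => ⟨by linarith [hx.1], hx.2⟩) hf hFmeas hint hbound hae

/-- Brezis–Lieb lemma in variable exponent Lebesgue spaces. -/
theorem stmt3 {N : ℕ} (Ω : Set (EuclideanSpace ℝ (Fin N))) (hΩ : MeasurableSet Ω)
    (hfin : volume Ω < ⊤)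
    (t : EuclideanSpace ℝ (Fin N) → ℝ) (ht : Measurable t)
    (tm tp : ℝ) (htm : 1 < tm)
    (htb : ∀ᵐ x ∂(volume.restrict Ω), tm ≤ t x ∧ t x ≤ tp)
    (f : EuclideanSpace ℝ (Fin N) → ℝ) (hf : Measurable f)
    (F : ℕ → EuclideanSpace ℝ (Fin N) → ℝ) (hFmeas : ∀ n, Measurable (F n))
    (hint : ∀ n, IntegrableOn (fun x => |F n x| ^ t x) Ω)
    (C : ℝ) (hbound : ∀ n, (∫ x in Ω, |F n x| ^ t x) ≤ C)
    (hae : ∀ᵐ x ∂(volume.restrict Ω), Tendsto (fun n => F n x) atTop (𝓝 (f x))) :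
    IntegrableOn (fun x => |f x| ^ t x) Ω ∧
    Tendsto (fun n => ∫ x in Ω, abs (|F n x| ^ t x - |F n x - f x| ^ t x - |f x| ^ t x))
      atTop (𝓝 0) :=
  stmt3_general Ω t ht tm tp htm htb f hf F hFmeas hint C hbound hae
end

section
/- Let Ω̄ ⊂ ℝ^N be compact, and let ν, ν₁, ν₂, … be nonnegative finite Radon measures on Ω̄ with νₙ ⇀* ν in the dual of C(Ω̄). Then for any continuous m : Ω̄ → ℝ with 1 < min m ≤ max m < ∞ and any φ ∈ C(Ω̄), the Luxemburg norms converge: ‖φ‖_{L^{m(·)}_{νₙ}(Ω̄)} → ‖φ‖_{L^{m(·)}_{ν}(Ω̄)} as n → ∞. -/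
open MeasureTheory Filter Topology

/-- Luxemburg norm of `u` in the variable exponent Lebesgue space `L_μ^{m(·)}`. -/
noncomputable def luxN {N : ℕ} (μ : Measure (EuclideanSpace ℝ (Fin N)))
    (m u : EuclideanSpace ℝ (Fin N) → ℝ) : ℝ :=
  sInf {c : ℝ | 0 < c ∧ (∫ x, (|u x| / c) ^ m x ∂μ) ≤ 1}

/-- The Laplacian of `u : ℝ^N → ℝ`. -/
noncomputable def lap {N : ℕ} (u : EuclideanSpace ℝ (Fin N) → ℝ)
    (x : EuclideanSpace ℝ (Fin N)) : ℝ :=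
  ∑ i : Fin N, fderiv ℝ (fun y => fderiv ℝ u y (EuclideanSpace.single i 1)) x
    (EuclideanSpace.single i 1)

/-- Smooth functions compactly supported in `Ω`, representing (a dense subclass of)
`X = W^{2,p(·)}(Ω) ∩ W₀^{1,p(·)}(Ω)`. -/
def Ccinf {N : ℕ} (Ω : Set (EuclideanSpace ℝ (Fin N))) :
    Set (EuclideanSpace ℝ (Fin N) → ℝ) :=
  {u | ContDiff ℝ (⊤ : ℕ∞) u ∧ HasCompactSupport u ∧ tsupport u ⊆ Ω}

/-- The best Sobolev constant `S = inf ‖Δφ‖_{p(·)} / |φ|_{q(·)}`. -/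
noncomputable def sobS {N : ℕ} (Ω : Set (EuclideanSpace ℝ (Fin N)))
    (p q : EuclideanSpace ℝ (Fin N) → ℝ) : ℝ :=
  sInf {y : ℝ | ∃ φ ∈ Ccinf Ω, φ ≠ 0 ∧
    y = luxN (volume.restrict Ω) p (lap φ) / luxN (volume.restrict Ω) q φ}

namespace Stmt10Aux

variable {N : ℕ}

lemma integrable_of_cont {K : Set (EuclideanSpace ℝ (Fin N))} (hK : IsCompact K)
    (μ : Measure (EuclideanSpace ℝ (Fin N))) (hf : μ Set.univ < ⊤) (hs : μ Kᶜ = 0)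
    {g : EuclideanSpace ℝ (Fin N) → ℝ} (hg : Continuous g) : Integrable g μ := by
  haveI : IsFiniteMeasure μ := ⟨hf⟩
  obtain ⟨C, hC⟩ := hK.exists_bound_of_continuousOn hg.continuousOn
  have hae : ∀ᵐ x ∂μ, x ∈ K := by
    rw [MeasureTheory.ae_iff]
    exact hs
  exact (integrable_const C).mono' hg.aestronglyMeasurable (hae.mono fun x hx => hC x hx)

lemma key {K : Set (EuclideanSpace ℝ (Fin N))} (hK : IsCompact K)
    (ν : Measure (EuclideanSpace ℝ (Fin N))) (νn : ℕ → Measure (EuclideanSpace ℝ (Fin N)))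
    (hνf : ν Set.univ < ⊤) (hνnf : ∀ n, νn n Set.univ < ⊤)
    (hνs : ν Kᶜ = 0) (hνns : ∀ n, νn n Kᶜ = 0)
    (hw : ∀ g : EuclideanSpace ℝ (Fin N) → ℝ, Continuous g →
      Tendsto (fun n => ∫ x, g x ∂(νn n)) atTop (𝓝 (∫ x, g x ∂ν)))
    (m : EuclideanSpace ℝ (Fin N) → ℝ) (hm : Continuous m) (hm1 : ∀ x, 1 ≤ m x)
    (φ : EuclideanSpace ℝ (Fin N) → ℝ) (hφ : Continuous φ) :
    Tendsto (fun n => luxN (νn n) m φ) atTop (𝓝 (luxN ν m φ)) := by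
  set g : ℝ → EuclideanSpace ℝ (Fin N) → ℝ := fun c x => (|φ x| / c) ^ m x with hgdef
  set S : Measure (EuclideanSpace ℝ (Fin N)) → Set ℝ :=
    fun μ => {c | 0 < c ∧ ∫ x, g c x ∂μ ≤ 1} with hSdef
  have hlux : ∀ μ : Measure (EuclideanSpace ℝ (Fin N)), luxN μ m φ = sInf (S μ) := fun μ => rfl
  -- continuity of g c
  have hgc : ∀ c : ℝ, Continuous (g c) := by
    intro c
    exact (hφ.abs.div_const c).rpow hm fun x => Or.inr (lt_of_lt_of_le zero_lt_one (hm1 x))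
  -- monotonicity in c
  have hmono : ∀ {c c' : ℝ}, 0 < c → c ≤ c' → ∀ x, g c' x ≤ g c x := by
    intro c c' hc hcc x
    have hc' : 0 < c' := lt_of_lt_of_le hc hcc
    refine Real.rpow_le_rpow (div_nonneg (abs_nonneg _) hc'.le) ?_
      (le_trans zero_le_one (hm1 x))
    gcongr
  -- b ^ m x ≤ b for 0 ≤ b ≤ 1
  have hpow_le : ∀ b : ℝ, 0 ≤ b → b ≤ 1 → ∀ x, b ^ m x ≤ b := by
    intro b hb0 hb1 x
    rcases hb0.eq_or_lt with h | h
    · rw [← h, Real.zero_rpow (by linarith [hm1 x] : m x ≠ 0)]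
    · calc b ^ m x ≤ b ^ (1 : ℝ) := Real.rpow_le_rpow_of_exponent_ge h hb1 (hm1 x)
        _ = b := Real.rpow_one b
  -- scaling
  have hscale : ∀ {c t : ℝ}, 0 < c → 1 ≤ t → ∀ x, g (t * c) x ≤ t⁻¹ * g c x := by
    intro c t hc ht x
    have ht0 : 0 < t := lt_of_lt_of_le zero_lt_one ht
    have hb : |φ x| / (t * c) = t⁻¹ * (|φ x| / c) := by field_simp
    have : g (t * c) x = t⁻¹ ^ m x * (|φ x| / c) ^ m x := by
      rw [hgdef]; simp only; rw [hb, Real.mul_rpow (by positivity) (by positivity)]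
    rw [this]
    have h1 : t⁻¹ ^ m x ≤ t⁻¹ := hpow_le t⁻¹ (by positivity) (inv_le_one_of_one_le₀ ht) x
    exact mul_le_mul_of_nonneg_right h1 (Real.rpow_nonneg (by positivity) _)
  -- integrability
  have hInt : ∀ (μ : Measure (EuclideanSpace ℝ (Fin N))), μ Set.univ < ⊤ → μ Kᶜ = 0 →
      ∀ c : ℝ, Integrable (g c) μ :=
    fun μ h1 h2 c => integrable_of_cont hK μ h1 h2 (hgc c)
  -- nonemptiness of S μ
  have hSne : ∀ (μ : Measure (EuclideanSpace ℝ (Fin N))), μ Set.univ < ⊤ → μ Kᶜ = 0 →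
      (S μ).Nonempty := by
    intro μ h1 h2
    haveI : IsFiniteMeasure μ := ⟨h1⟩
    obtain ⟨M, hM⟩ := hK.exists_bound_of_continuousOn hφ.continuousOn
    set M' := max M 1 with hM'def
    have hM'1 : (1 : ℝ) ≤ M' := le_max_right _ _
    have hM'0 : (0 : ℝ) ≤ M' := by linarith
    set V := (μ Set.univ).toReal with hVdef
    have hV0 : 0 ≤ V := ENNReal.toReal_nonneg
    set c := M' * V + M' with hcdef
    have hcM' : M' ≤ c := by nlinarith
    have hcpos : 0 < c := by nlinarith
    refine ⟨c, hcpos, ?_⟩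
    have hae : ∀ᵐ x ∂μ, x ∈ K := by rw [MeasureTheory.ae_iff]; exact h2
    have hbound : ∀ᵐ x ∂μ, g c x ≤ M' / c := by
      filter_upwards [hae] with x hx
      have hφx : |φ x| ≤ M' := le_trans (by simpa using hM x hx) (le_max_left _ _)
      have hb1 : |φ x| / c ≤ M' / c := by gcongr
      have hb2 : |φ x| / c ≤ 1 := le_trans hb1 (by rw [div_le_one hcpos]; exact hcM')
      calc g c x ≤ |φ x| / c := hpow_le _ (by positivity) hb2 x
        _ ≤ M' / c := hb1
    calc ∫ x, g c x ∂μ ≤ ∫ _x, M' / c ∂μ :=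
          integral_mono_ae (hInt μ h1 h2 c) (integrable_const _) hbound
      _ = V * (M' / c) := by rw [integral_const]; rw [smul_eq_mul, hVdef]; rfl
      _ ≤ 1 := by rw [mul_div_assoc']; rw [div_le_one hcpos]; nlinarith
  have hbdd : ∀ μ : Measure (EuclideanSpace ℝ (Fin N)), BddBelow (S μ) :=
    fun μ => ⟨0, fun c hc => hc.1.le⟩
  have h0le : ∀ (μ : Measure (EuclideanSpace ℝ (Fin N))), μ Set.univ < ⊤ → μ Kᶜ = 0 →
      0 ≤ sInf (S μ) := fun μ h1 h2 => le_csInf (hSne μ h1 h2) fun c hc => hc.1.le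
  -- main argument
  rw [Metric.tendsto_nhds]
  intro ε hε
  obtain ⟨L, hLdef⟩ : ∃ L : ℝ, L = sInf (S ν) := ⟨_, rfl⟩
  rw [hlux ν, ← hLdef]
  have hL0 : 0 ≤ L := hLdef ▸ h0le ν hνf hνs
  have hupper : ∀ᶠ n in atTop, luxN (νn n) m φ < L + ε := by
    obtain ⟨c, hcS, hclt⟩ := exists_lt_of_csInf_lt (hSne ν hνf hνs)
      (show sInf (S ν) < L + ε / 2 by rw [← hLdef]; linarith)
    set c' := L + ε / 2 with hc'def
    clear_value c'
    have hc'pos : 0 < c' := by have := hcS.1; linarith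
    have ht : 1 < c' / c := (one_lt_div hcS.1).2 hclt
    have hc'eq : c' = (c' / c) * c := (div_mul_cancel₀ c' (ne_of_gt hcS.1)).symm
    have hFlt : ∫ x, g c' x ∂ν < 1 := by
      calc ∫ x, g c' x ∂ν ≤ ∫ x, (c'/c)⁻¹ * g c x ∂ν := by
            apply integral_mono (hInt ν hνf hνs c') ((hInt ν hνf hνs c).const_mul _)
            intro x
            have := hscale hcS.1 ht.le x
            rwa [← hc'eq] at this
        _ = (c'/c)⁻¹ * ∫ x, g c x ∂ν := integral_const_mul _ _
        _ ≤ (c'/c)⁻¹ * 1 := mul_le_mul_of_nonneg_left hcS.2 (by positivity)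
        _ < 1 := by rw [mul_one]; exact inv_lt_one_of_one_lt₀ ht
    have hev := (hw (g c') (hgc c')).eventually_lt_const hFlt
    filter_upwards [hev] with n hn
    have hc'mem : c' ∈ S (νn n) := ⟨hc'pos, hn.le⟩
    calc luxN (νn n) m φ = sInf (S (νn n)) := hlux _
      _ ≤ c' := csInf_le (hbdd _) hc'mem
      _ < L + ε := by linarith
  have hlower : ∀ᶠ n in atTop, L - ε < luxN (νn n) m φ := by
    rcases le_or_gt L (ε / 2) with h | h
    · filter_upwards with n
      have := h0le (νn n) (hνnf n) (hνns n)
      rw [hlux (νn n)]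
      linarith
    · set c0 := L - ε / 2 with hc0def
      clear_value c0
      have hc0pos : 0 < c0 := by linarith
      have hc0lt : c0 < L := by linarith
      have hc0notin : c0 ∉ S ν := fun hmem =>
        absurd (csInf_le (hbdd ν) hmem) (by rw [← hLdef]; exact not_le.2 hc0lt)
      have hF : 1 < ∫ x, g c0 x ∂ν := by
        by_contra h'
        push_neg at h'
        exact hc0notin ⟨hc0pos, h'⟩
      have hev := (hw (g c0) (hgc c0)).eventually_const_lt hF
      filter_upwards [hev] with n hn
      have hlb : ∀ c ∈ S (νn n), c0 ≤ c := by
        intro c hc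
        by_contra hlt
        push_neg at hlt
        have hle : ∫ x, g c0 x ∂(νn n) ≤ ∫ x, g c x ∂(νn n) :=
          integral_mono (hInt (νn n) (hνnf n) (hνns n) c0)
            (hInt (νn n) (hνnf n) (hνns n) c) (hmono hc.1 hlt.le)
        linarith [hc.2]
      have : c0 ≤ sInf (S (νn n)) := le_csInf (hSne (νn n) (hνnf n) (hνns n)) hlb
      rw [hlux (νn n)]
      linarith
  filter_upwards [hupper, hlower] with n h1 h2
  rw [Real.dist_eq, abs_lt]
  constructor <;> linarith

end Stmt10Aux


/-- weak-* convergence of Radon measures implies convergence of the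
Luxemburg norms of any fixed continuous function. -/
theorem stmt10 {N : ℕ} (K : Set (EuclideanSpace ℝ (Fin N))) (hK : IsCompact K)
    (ν : Measure (EuclideanSpace ℝ (Fin N))) (νn : ℕ → Measure (EuclideanSpace ℝ (Fin N)))
    (hνf : ν Set.univ < ⊤) (hνnf : ∀ n, νn n Set.univ < ⊤)
    (hνs : ν Kᶜ = 0) (hνns : ∀ n, νn n Kᶜ = 0)
    (hw : ∀ g : EuclideanSpace ℝ (Fin N) → ℝ, Continuous g →
      Tendsto (fun n => ∫ x, g x ∂(νn n)) atTop (𝓝 (∫ x, g x ∂ν)))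
    (m : EuclideanSpace ℝ (Fin N) → ℝ) (hm : Continuous m) (hm1 : ∀ x ∈ K, 1 < m x)
    (φ : EuclideanSpace ℝ (Fin N) → ℝ) (hφ : Continuous φ) :
    Tendsto (fun n => luxN (νn n) m φ) atTop (𝓝 (luxN ν m φ)) := by
  set m' : EuclideanSpace ℝ (Fin N) → ℝ := fun x => max (m x) 1 with hm'def
  have hm' : Continuous m' := hm.max continuous_const
  have hm'1 : ∀ x, 1 ≤ m' x := fun x => le_max_right _ _
  have hcong : ∀ μ : Measure (EuclideanSpace ℝ (Fin N)), μ Kᶜ = 0 →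
      luxN μ m φ = luxN μ m' φ := by
    intro μ hs
    have hae : ∀ᵐ x ∂μ, x ∈ K := by rw [MeasureTheory.ae_iff]; exact hs
    unfold luxN
    congr 1
    ext c
    have hint : ∫ x, (|φ x| / c) ^ m x ∂μ = ∫ x, (|φ x| / c) ^ m' x ∂μ := by
      refine integral_congr_ae ?_
      filter_upwards [hae] with x hx
      rw [hm'def]
      simp only
      rw [max_eq_left (hm1 x hx).le]
    simp only [Set.mem_setOf_eq, hint]
  have hmain := Stmt10Aux.key hK ν νn hνf hνnf hνs hνns hw m' hm' hm'1 φ hφ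
  rw [hcong ν hνs]
  exact hmain.congr fun n => (hcong (νn n) (hνns n)).symm
end
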